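/- arXiv:2408.01238 — 3 statements merged into one kernel-verified Lean document; each statement's English description precedes it below -/
import Mathlib

section
/- For every J ∈ ℝ and n ∈ ℕ, the trigonometric interpolation operator ex_n : L_2(T_n^d) → H_J(T^d), defined by ex_n f = Σ_{k ∈ {-n,...,n}^d} ⟨f, ς_k⟩_n ς_k, is a bounded linear operator with ‖ex_n f‖²_{H_J} ≤ [(1+|n|²)^J ∨ 1] · ‖f‖²_n, and satisfies pr_n ∘ ex_n = id on L_2(T_n^d) and ex_n ∘ pr_n = pr_n on H_J(T^d). -/
open scoped BigOperators
open Real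

noncomputable section

/-- The discrete `d`-dimensional torus with `(2n+1)^d` points. -/
abbrev DTorus (d n : ℕ) := Fin d → ZMod (2 * n + 1)

/-- Squared euclidean norm `|k|²` of a lattice vector `k ∈ ℤ^d`. -/
def latNormSq (d : ℕ) (k : Fin d → ℤ) : ℝ := ∑ j, ((k j : ℝ)) ^ 2

/-- Sobolev weight `(1+|k|²)^J`. -/
def sobWeight (d : ℕ) (J : ℝ) (k : Fin d → ℤ) : ℝ := (1 + latNormSq d k) ^ J

/-- Squared Sobolev norm of an element of `H_J(T^d)` represented by its Fourier
coefficient sequence. -/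
def sobNormSq (d : ℕ) (J : ℝ) (c : (Fin d → ℤ) → ℂ) : ℝ :=
  ∑' k, sobWeight d J k * ‖c k‖ ^ 2

/-- Sobolev norm. -/
def sobNorm (d : ℕ) (J : ℝ) (c : (Fin d → ℤ) → ℂ) : ℝ := Real.sqrt (sobNormSq d J c)

/-- The character `ς_k(y) = e^{i k·y}`. -/
def charFun (d : ℕ) (k : Fin d → ℤ) (y : Fin d → ℝ) : ℂ :=
  Complex.exp (Complex.I * (∑ j, (k j : ℝ) * y j))

/-- The point of `T^d` corresponding to a lattice point of the discrete torus. -/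
def discPt (d n : ℕ) (x : DTorus d n) : Fin d → ℝ :=
  fun j => 2 * π * ((x j).val : ℝ) / (2 * (n : ℝ) + 1)

/-- Normalized discrete inner product on `L_2(T_n^d)` (complex-valued version). -/
def dInner (d n : ℕ) (f g : DTorus d n → ℂ) : ℂ :=
  (((2 * (n : ℝ) + 1) ^ d : ℝ) : ℂ)⁻¹ * ∑ x : DTorus d n, f x * (starRingEnd ℂ) (g x)

/-- Squared discrete `L²` norm `‖f‖²_n`. -/
def dNormSq (d n : ℕ) (f : DTorus d n → ℂ) : ℝ :=
  ((2 * (n : ℝ) + 1) ^ d)⁻¹ * ∑ x : DTorus d n, ‖f x‖ ^ 2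

/-- Fourier coefficient sequence of the trigonometric interpolation
`ex_n f = Σ_{k ∈ {-n,…,n}^d} ⟨f, ς_k⟩_n ς_k`. -/
def exCoef (d n : ℕ) (f : DTorus d n → ℂ) : (Fin d → ℤ) → ℂ :=
  fun k => if ∀ j, |k j| ≤ (n : ℤ) then
    dInner d n f (fun x => charFun d k (discPt d n x)) else 0

/-- Truncation of a coefficient sequence to the cube `{-n,…,n}^d` (i.e. `pr_n`). -/
def trunc (d n : ℕ) (c : (Fin d → ℤ) → ℂ) : (Fin d → ℤ) → ℂ :=
  fun k => if ∀ j, |k j| ≤ (n : ℤ) then c k else 0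

/-- The cube `{-n,…,n}^d ⊂ ℤ^d`. -/
def cube (d n : ℕ) : Finset (Fin d → ℤ) :=
  Fintype.piFinset fun _ => Finset.Icc (-(n : ℤ)) (n : ℤ)

/-- The restriction of the Fourier projection `pr_n g` to the discrete torus. -/
def prDisc (d n : ℕ) (c : (Fin d → ℤ) → ℂ) : DTorus d n → ℂ :=
  fun x => ∑ k ∈ cube d n, c k * charFun d k (discPt d n x)

/-- `L²(T^d)` inner product in Fourier coordinates. -/
def seqInner (d : ℕ) (c₁ c₂ : (Fin d → ℤ) → ℂ) : ℂ :=
  ∑' k, c₁ k * (starRingEnd ℂ) (c₂ k)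


/-!
At the grid points, `ς_k(x) = ψ(k̄ ⬝ᵥ x)` with `ψ = ZMod.stdAddChar` and `k̄` the reduction of `k`
modulo `2n+1`, and reduction is a bijection from the cube `{-n,…,n}^d` onto `(ZMod (2n+1))^d`
(inverse `ZMod.valMinAbs`). Orthogonality of the characters of `(ZMod (2n+1))^d` therefore gives
both `⟨ς_l, ς_k⟩_n = δ_{lk}` on the cube, whence `ex_n ∘ pr_n = pr_n`, and the dual relation
`∑_{k ∈ cube} ς_k(x) conj ς_k(y) = (2n+1)^d δ_{xy}`, whence `pr_n ∘ ex_n = id`. The latter yields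
Parseval's identity `∑_{k ∈ cube} |⟨f, ς_k⟩_n|² = ‖f‖²_n`, and the Sobolev weight is at most
`(1 + dn²)^J ∨ 1` on the cube.
-/

open Finset ComplexConjugate

theorem two_mul_natCast_add_one_ne_zero {K : Type*} [Semiring K] [CharZero K] (n : ℕ) :
    2 * (n : K) + 1 ≠ 0 := by
  exact_mod_cast Nat.succ_ne_zero (2 * n)

theorem ZMod.valMinAbs_intCast_of_two_mul_abs_lt {N : ℕ} [NeZero N] {k : ℤ}
    (hk : 2 * |k| < N) : (k : ZMod N).valMinAbs = k := by
  rw [ZMod.valMinAbs_spec]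
  exact ⟨rfl, by linarith [neg_abs_le k], by linarith [le_abs_self k]⟩

namespace AddChar

theorem map_sum_eq_prod {A M : Type*} [AddCommMonoid A] [CommMonoid M] (ψ : AddChar A M)
    {ι : Type*} (s : Finset ι) (f : ι → A) : ψ (∑ i ∈ s, f i) = ∏ i ∈ s, ψ (f i) :=
  map_sum ψ.toAddMonoidHom f s

theorem sum_dotProduct {R R' ι : Type*} [CommRing R] [Fintype R] [DecidableEq R] [CommRing R']
    [IsDomain R'] [Fintype ι] [DecidableEq ι] {ψ : AddChar R R'} (hψ : ψ.IsPrimitive)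
    (v : ι → R) :
    ∑ x : ι → R, ψ (v ⬝ᵥ x) = if v = 0 then (Fintype.card R : R') ^ Fintype.card ι else 0 := by
  simp only [dotProduct, map_sum_eq_prod]
  rw [← Fintype.prod_sum (fun i (t : R) => ψ (v i * t))]
  simp only [mul_comm (v _), sum_mulShift _ hψ]
  split_ifs with hv
  · simp [hv]
  · obtain ⟨i, hi⟩ := Function.ne_iff.mp hv
    exact prod_eq_zero (mem_univ i) (by simp [show v i ≠ 0 from hi])

end AddChar

section DiscreteTorus

variable {d n : ℕ}

theorem charFun_discPt (k : Fin d → ℤ) (x : DTorus d n) :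
    charFun d k (discPt d n x) = ZMod.stdAddChar ((Int.cast ∘ k : DTorus d n) ⬝ᵥ x) := by
  have hdot : (Int.cast ∘ k : DTorus d n) ⬝ᵥ x =
      ((∑ j, k j * (x j).val : ℤ) : ZMod (2 * n + 1)) := by
    simp [dotProduct]
  have hN := two_mul_natCast_add_one_ne_zero (K := ℂ) n
  rw [hdot, ZMod.stdAddChar_coe, charFun]
  congr 1
  simp only [discPt]
  push_cast
  rw [mul_sum, mul_sum, sum_div]
  refine sum_congr rfl fun j _ => ?_
  field_simp

theorem mem_cube_iff {k : Fin d → ℤ} : k ∈ cube d n ↔ ∀ j, |k j| ≤ (n : ℤ) := by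
  simp only [cube, Fintype.mem_piFinset, mem_Icc, abs_le]

theorem valMinAbs_intCast_comp_of_mem_cube {k : Fin d → ℤ} (hk : k ∈ cube d n) :
    (fun j => (k j : ZMod (2 * n + 1)).valMinAbs) = k := by
  funext j
  refine ZMod.valMinAbs_intCast_of_two_mul_abs_lt ?_
  have := mem_cube_iff.mp hk j
  push_cast
  linarith

theorem injOn_intCast_comp_cube :
    Set.InjOn (fun k : Fin d → ℤ => (Int.cast ∘ k : DTorus d n)) (cube d n) := fun k hk l hl h => by
  rw [← valMinAbs_intCast_comp_of_mem_cube hk, ← valMinAbs_intCast_comp_of_mem_cube hl]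
  exact funext fun j => congrArg ZMod.valMinAbs (congrFun h j)

theorem sum_cube_intCast_comp {M : Type*} [AddCommMonoid M] (F : DTorus d n → M) :
    ∑ k ∈ cube d n, F (Int.cast ∘ k) = ∑ x, F x := by
  refine sum_nbij' (Int.cast ∘ ·) (fun x j => (x j).valMinAbs) (fun _ _ => mem_univ _)
    (fun x _ => ?_) (fun _ hk => valMinAbs_intCast_comp_of_mem_cube hk)
    (fun x _ => funext fun j => ZMod.coe_valMinAbs (x j)) (fun _ _ => rfl)
  refine mem_cube_iff.mpr fun j => ?_
  have := (x j).natAbs_valMinAbs_le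
  rw [abs_le]
  omega

theorem sum_stdAddChar_dotProduct (v : DTorus d n) :
    ∑ x : DTorus d n, ZMod.stdAddChar (v ⬝ᵥ x) = if v = 0 then (2 * (n : ℂ) + 1) ^ d else 0 := by
  rw [AddChar.sum_dotProduct (ZMod.isPrimitive_stdAddChar _)]
  simp

theorem charFun_discPt_mul_conj (k l : Fin d → ℤ) (x y : DTorus d n) :
    charFun d k (discPt d n x) * conj (charFun d l (discPt d n y)) =
      ZMod.stdAddChar ((Int.cast ∘ k : DTorus d n) ⬝ᵥ x - (Int.cast ∘ l : DTorus d n) ⬝ᵥ y) := by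
  rw [charFun_discPt, charFun_discPt, ← AddChar.map_neg_eq_conj, ← AddChar.map_add_eq_mul,
    sub_eq_add_neg]

theorem sum_charFun_discPt_mul_conj_of_mem_cube {k l : Fin d → ℤ} (hk : k ∈ cube d n)
    (hl : l ∈ cube d n) :
    ∑ x : DTorus d n, charFun d k (discPt d n x) * conj (charFun d l (discPt d n x)) =
      if k = l then (2 * (n : ℂ) + 1) ^ d else 0 := by
  simp only [charFun_discPt_mul_conj, ← sub_dotProduct, sum_stdAddChar_dotProduct, sub_eq_zero,
    injOn_intCast_comp_cube.eq_iff hk hl]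

theorem sum_cube_charFun_discPt_mul_conj (x y : DTorus d n) :
    ∑ k ∈ cube d n, charFun d k (discPt d n x) * conj (charFun d k (discPt d n y)) =
      if x = y then (2 * (n : ℂ) + 1) ^ d else 0 := by
  simp only [charFun_discPt_mul_conj, ← dotProduct_sub]
  rw [sum_cube_intCast_comp (fun κ => ZMod.stdAddChar (κ ⬝ᵥ (x - y)))]
  simp only [dotProduct_comm _ (x - y), sum_stdAddChar_dotProduct, sub_eq_zero]

theorem dInner_eq_inv_mul_sum (f g : DTorus d n → ℂ) :
    dInner d n f g = ((2 * (n : ℂ) + 1) ^ d)⁻¹ * ∑ x, f x * conj (g x) := by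
  simp [dInner]

theorem dInner_add_left (f g h : DTorus d n → ℂ) :
    dInner d n (f + g) h = dInner d n f h + dInner d n g h := by
  simp only [dInner, Pi.add_apply, add_mul, sum_add_distrib, mul_add]

theorem dInner_smul_left (a : ℂ) (f g : DTorus d n → ℂ) :
    dInner d n (a • f) g = a * dInner d n f g := by
  simp only [dInner, Pi.smul_apply, smul_eq_mul, mul_assoc, ← mul_sum]
  ring

theorem dInner_self (f : DTorus d n → ℂ) : dInner d n f f = dNormSq d n f := by
  simp only [dInner, dNormSq, Complex.mul_conj', Complex.ofReal_mul, Complex.ofReal_inv,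
    Complex.ofReal_sum, Complex.ofReal_pow]

theorem dInner_prDisc (f : DTorus d n → ℂ) (c : (Fin d → ℤ) → ℂ) :
    dInner d n f (prDisc d n c) =
      ∑ k ∈ cube d n, conj (c k) * dInner d n f (fun x => charFun d k (discPt d n x)) := by
  simp only [dInner, prDisc, map_sum, map_mul, mul_sum]
  rw [sum_comm]
  exact sum_congr rfl fun k _ => sum_congr rfl fun x _ => by ring

theorem exCoef_of_mem_cube (f : DTorus d n → ℂ) {k : Fin d → ℤ} (hk : k ∈ cube d n) :
    exCoef d n f k = dInner d n f (fun x => charFun d k (discPt d n x)) :=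
  if_pos (mem_cube_iff.mp hk)

theorem exCoef_of_notMem_cube (f : DTorus d n → ℂ) {k : Fin d → ℤ} (hk : k ∉ cube d n) :
    exCoef d n f k = 0 :=
  if_neg (mt mem_cube_iff.mpr hk)

theorem exCoef_add (f g : DTorus d n → ℂ) : exCoef d n (f + g) = exCoef d n f + exCoef d n g := by
  funext k
  by_cases hk : k ∈ cube d n
  · simp only [Pi.add_apply, exCoef_of_mem_cube _ hk, dInner_add_left]
  · simp only [Pi.add_apply, exCoef_of_notMem_cube _ hk, add_zero]

theorem exCoef_smul (a : ℂ) (f : DTorus d n → ℂ) : exCoef d n (a • f) = a • exCoef d n f := by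
  funext k
  by_cases hk : k ∈ cube d n
  · simp only [Pi.smul_apply, smul_eq_mul, exCoef_of_mem_cube _ hk, dInner_smul_left]
  · simp only [Pi.smul_apply, smul_eq_mul, exCoef_of_notMem_cube _ hk, mul_zero]

theorem prDisc_exCoef (f : DTorus d n → ℂ) : prDisc d n (exCoef d n f) = f := by
  funext x
  have hN := two_mul_natCast_add_one_ne_zero (K := ℂ) n
  calc prDisc d n (exCoef d n f) x
      = ((2 * (n : ℂ) + 1) ^ d)⁻¹ * ∑ y, f y *
          ∑ k ∈ cube d n, charFun d k (discPt d n x) * conj (charFun d k (discPt d n y)) := by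
        rw [prDisc,
          sum_congr rfl fun k hk => by rw [exCoef_of_mem_cube f hk, dInner_eq_inv_mul_sum]]
        simp only [mul_sum, sum_mul]
        rw [sum_comm]
        exact sum_congr rfl fun y _ => sum_congr rfl fun k _ => by ring
    _ = f x := by
        simp only [sum_cube_charFun_discPt_mul_conj, mul_ite, mul_zero, sum_ite_eq, mem_univ,
          if_true]
        field_simp

theorem exCoef_prDisc (c : (Fin d → ℤ) → ℂ) : exCoef d n (prDisc d n c) = trunc d n c := by
  funext k
  by_cases hk : k ∈ cube d n
  · have hN := two_mul_natCast_add_one_ne_zero (K := ℂ) n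
    calc exCoef d n (prDisc d n c) k
        = ((2 * (n : ℂ) + 1) ^ d)⁻¹ * ∑ l ∈ cube d n, c l *
            ∑ x, charFun d l (discPt d n x) * conj (charFun d k (discPt d n x)) := by
          rw [exCoef_of_mem_cube _ hk, dInner_eq_inv_mul_sum]
          simp only [prDisc, mul_sum, sum_mul]
          rw [sum_comm]
          exact sum_congr rfl fun l _ => sum_congr rfl fun x _ => by ring
      _ = c k := by
          rw [sum_congr rfl fun l hl => by rw [sum_charFun_discPt_mul_conj_of_mem_cube hl hk]]
          simp only [mul_ite, mul_zero, sum_ite_eq', hk, if_true]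
          field_simp
      _ = trunc d n c k := (if_pos (mem_cube_iff.mp hk)).symm
  · rw [exCoef_of_notMem_cube _ hk, trunc, if_neg (mt mem_cube_iff.mpr hk)]

theorem sum_cube_norm_exCoef_sq (f : DTorus d n → ℂ) :
    ∑ k ∈ cube d n, ‖exCoef d n f k‖ ^ 2 = dNormSq d n f := by
  apply Complex.ofReal_injective
  rw [← dInner_self, ← congrArg (dInner d n f) (prDisc_exCoef f), dInner_prDisc]
  push_cast
  exact sum_congr rfl fun k hk => by rw [← exCoef_of_mem_cube f hk, Complex.conj_mul']

theorem latNormSq_le_of_mem_cube {k : Fin d → ℤ} (hk : k ∈ cube d n) :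
    latNormSq d k ≤ d * (n : ℝ) ^ 2 := by
  calc latNormSq d k ≤ ∑ _j : Fin d, (n : ℝ) ^ 2 := by
        refine sum_le_sum fun j _ => ?_
        have hj : |(k j : ℝ)| ≤ n := by exact_mod_cast mem_cube_iff.mp hk j
        exact sq_le_sq' (abs_le.mp hj).1 (abs_le.mp hj).2
    _ = d * (n : ℝ) ^ 2 := by simp

theorem sobWeight_le_of_mem_cube (J : ℝ) {k : Fin d → ℤ} (hk : k ∈ cube d n) :
    sobWeight d J k ≤ (1 + d * (n : ℝ) ^ 2) ^ J ⊔ 1 := by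
  have h1 : 1 ≤ 1 + latNormSq d k := le_add_of_nonneg_right (sum_nonneg fun j _ => sq_nonneg _)
  rcases le_or_gt 0 J with hJ | hJ
  · exact le_sup_of_le_left <| Real.rpow_le_rpow (by linarith) (by
      linarith [latNormSq_le_of_mem_cube hk]) hJ
  · exact le_sup_of_le_right (Real.rpow_le_one_of_one_le_of_nonpos h1 hJ.le)

theorem sobNormSq_exCoef_le (J : ℝ) (f : DTorus d n → ℂ) :
    sobNormSq d J (exCoef d n f) ≤ ((1 + d * (n : ℝ) ^ 2) ^ J ⊔ 1) * dNormSq d n f := by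
  rw [sobNormSq, tsum_eq_sum fun k hk => by rw [exCoef_of_notMem_cube f hk]; simp,
    ← sum_cube_norm_exCoef_sq, mul_sum]
  exact sum_le_sum fun k hk =>
    mul_le_mul_of_nonneg_right (sobWeight_le_of_mem_cube J hk) (sq_nonneg _)

end DiscreteTorus

/-- For every `J ∈ ℝ` and `n`, trigonometric interpolation
`ex_n : L_2(T_n^d) → H_J(T^d)` is a bounded linear operator with
`‖ex_n f‖²_{H_J} ≤ [(1+|n|²)^J ∨ 1]·‖f‖²_n` (here `|n|² = d n²` is the squared norm of
the extreme lattice vector `(n,…,n)`), and it satisfies `pr_n ∘ ex_n = id` on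
`L_2(T_n^d)` and `ex_n ∘ pr_n = pr_n` on `H_J(T^d)`. -/
theorem ex_bounded_linear_and_projection_identities (d n : ℕ) (J : ℝ) :
    (∀ (f g : DTorus d n → ℂ) (a : ℂ),
        exCoef d n (f + g) = exCoef d n f + exCoef d n g ∧
        exCoef d n (a • f) = a • exCoef d n f) ∧
    (∀ f : DTorus d n → ℂ,
        sobNormSq d J (exCoef d n f)
          ≤ ((1 + (d : ℝ) * (n : ℝ) ^ 2) ^ J ⊔ 1) * dNormSq d n f) ∧
    (∀ f : DTorus d n → ℂ, prDisc d n (exCoef d n f) = f) ∧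
    (∀ c : (Fin d → ℤ) → ℂ, exCoef d n (prDisc d n c) = trunc d n c) :=
  ⟨fun f g a => ⟨exCoef_add f g, exCoef_smul a f⟩, sobNormSq_exCoef_le J, prDisc_exCoef,
    exCoef_prDisc⟩

end
end

section
/- Let J ∈ ℝ, n ∈ ℕ, j ∈ {1,...,d}, and f : T_n^d → ℝ. Then ‖ex_n ∂_{n,j} f‖_{H_J} ≤ ‖ex_n f‖_{H_{J+1}}, i.e. the interpolated discrete derivative loses exactly one Sobolev degree. -/
open scoped BigOperators
open Real

noncomputable section

/-- Forward discrete partial derivative `∂_{n,j} f(x) = ((2n+1)/(2π))(f(x+e_j^n) - f(x))`. -/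
def dFwdR (d n : ℕ) (j : Fin d) (f : DTorus d n → ℝ) : DTorus d n → ℝ :=
  fun x => (2 * (n : ℝ) + 1) / (2 * π) * (f (x + Pi.single j 1) - f x)

lemma norm_exp_I_mul_sub_one_le (θ : ℝ) :
    ‖Complex.exp (Complex.I * θ) - 1‖ ≤ |θ| := by
  have hab : Complex.exp (Complex.I * (θ/2:ℝ)) * Complex.exp (-(↑(θ/2:ℝ)) * Complex.I) = 1 := by
    rw [← Complex.exp_add]
    norm_num [mul_comm]
  have key : Complex.exp (Complex.I * θ) - 1
      = Complex.exp (Complex.I * (θ/2:ℝ)) * (2 * Complex.sin (θ/2:ℝ) * Complex.I) := by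
    have h2 : (Complex.I * (θ:ℂ)) = Complex.I * (θ/2:ℝ) + Complex.I * (θ/2:ℝ) := by
      push_cast; ring
    rw [h2, Complex.exp_add, Complex.sin]
    set a := Complex.exp (Complex.I * ((θ:ℝ)/2 : ℝ))
    set b := Complex.exp (-(↑((θ:ℝ)/2:ℝ)) * Complex.I)
    have ha : Complex.exp (↑((θ:ℝ)/2:ℝ) * Complex.I) = a := by rw [mul_comm]
    rw [ha]
    have hI : Complex.I * Complex.I = -1 := Complex.I_mul_I
    linear_combination (-(Complex.I*Complex.I)) * hab + (a^2 - 1) * hI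
  have h1 : ‖Complex.exp (Complex.I * (θ/2:ℝ))‖ = 1 := by
    rw [mul_comm]; exact Complex.norm_exp_ofReal_mul_I _
  have hsin : Complex.sin ((θ/2:ℝ):ℂ) = ((Real.sin (θ/2) : ℝ) : ℂ) :=
    (Complex.ofReal_sin _).symm
  rw [key, norm_mul, h1, one_mul, norm_mul, norm_mul, hsin, Complex.norm_I, mul_one,
    Complex.norm_real, Real.norm_eq_abs]
  have h3 : ‖(2:ℂ)‖ = 2 := by norm_num
  rw [h3]
  have h4 := Real.abs_sin_le_abs (x := θ/2)
  rw [abs_div] at h4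
  norm_num at h4
  linarith

lemma charFun_shift (d n : ℕ) (j : Fin d) (k : Fin d → ℤ) (x : DTorus d n) :
    charFun d k (discPt d n (x + Pi.single j 1)) =
      Complex.exp (Complex.I * ((2 * π * ((k j : ℝ)) * (((1 : ZMod (2*n+1)).val : ℝ))
          / (2 * (n:ℝ) + 1) : ℝ))) * charFun d k (discPt d n x) := by
  haveI : NeZero (2*n+1) := ⟨by omega⟩
  set v : ℕ := (1 : ZMod (2*n+1)).val with hv
  set A : ℕ := (x j).val with hA
  set q : ℕ := (A + v) / (2*n+1) with hq
  set N : ℝ := 2 * (n:ℝ) + 1 with hNr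
  have hNne : N ≠ 0 := by positivity
  have hval : ((((x + Pi.single j 1 : DTorus d n)) j).val : ℝ) = (A : ℝ) + v - N * q := by
    have h1 : (((x + Pi.single j 1 : DTorus d n)) j).val = (A + v) % (2*n+1) := by
      have : ((x + Pi.single j 1 : DTorus d n)) j = x j + 1 := by simp
      rw [this, ZMod.val_add]
    have h2 : (A + v) % (2*n+1) + (2*n+1) * q = A + v := Nat.mod_add_div _ _
    have h3 : (((A + v) % (2*n+1) : ℕ) : ℝ) = (A:ℝ) + v - N * q := by
      have := congrArg (fun m : ℕ => (m : ℝ)) h2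
      push_cast at this
      rw [hNr]; push_cast; linarith
    rw [h1, h3]
  -- real sums
  set θ : ℝ := 2 * π * ((k j : ℝ)) * (v : ℝ) / N with hθ
  have hsum : (∑ l, (k l : ℝ) * discPt d n ((x + Pi.single j 1 : DTorus d n)) l)
      = θ + (∑ l, (k l : ℝ) * discPt d n x l) - 2 * π * ((k j : ℝ) * q) := by
    have hd : (∑ l, ((k l : ℝ) * discPt d n ((x + Pi.single j 1 : DTorus d n)) l
        - (k l : ℝ) * discPt d n x l)) = θ - 2 * π * ((k j : ℝ) * q) := by
      rw [Finset.sum_eq_single j]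
      · unfold discPt
        rw [hval, hθ, show (((x j).val : ℕ) : ℝ) = (A : ℝ) from rfl]
        field_simp
        ring
      · intro l _ hl
        have hxl : ((x + Pi.single j 1 : DTorus d n)) l = x l := by
          simp [Pi.single_eq_of_ne hl]
        unfold discPt
        rw [hxl]; ring
      · simp
    rw [Finset.sum_sub_distrib] at hd
    linarith
  unfold charFun
  rw [← Complex.exp_add]
  have : Complex.I * ((∑ l, (k l : ℝ) * discPt d n ((x + Pi.single j 1 : DTorus d n)) l : ℝ) : ℂ)
      = Complex.I * (θ:ℝ) + Complex.I * ((∑ l, (k l : ℝ) * discPt d n x l : ℝ) : ℂ)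
        + ((-((k j) * (q:ℤ)) : ℤ) : ℂ) * (2 * π * Complex.I) := by
    rw [hsum]
    push_cast
    ring
  rw [this, Complex.exp_add, Complex.exp_int_mul_two_pi_mul_I, mul_one]

lemma exCoef_dFwd (d n : ℕ) (j : Fin d) (f : DTorus d n → ℝ) (k : Fin d → ℤ) :
    exCoef d n (fun x => ((dFwdR d n j f x : ℝ) : ℂ)) k
      = (((2 * (n:ℝ) + 1) / (2 * π) : ℝ) : ℂ)
          * (Complex.exp (Complex.I * ((2 * π * ((k j : ℝ)) * (((1 : ZMod (2*n+1)).val : ℝ))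
              / (2 * (n:ℝ) + 1) : ℝ))) - 1)
          * exCoef d n (fun x => ((f x : ℝ) : ℂ)) k := by
  set θ : ℝ := 2 * π * ((k j : ℝ)) * (((1 : ZMod (2*n+1)).val : ℝ)) / (2 * (n:ℝ) + 1) with hθ
  set ω : ℂ := Complex.exp (Complex.I * (θ:ℝ)) with hω
  unfold exCoef
  by_cases hk : ∀ i, |k i| ≤ (n : ℤ)
  · rw [if_pos hk, if_pos hk]
    unfold dInner
    set ς : DTorus d n → ℂ := fun x => charFun d k (discPt d n x) with hς
    have hshift : ∀ x : DTorus d n, ς (x + Pi.single j 1) = ω * ς x := fun x =>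
      charFun_shift d n j k x
    have hωconj : ω * (starRingEnd ℂ) ω = 1 := by
      rw [hω, ← Complex.exp_conj]
      rw [← Complex.exp_add]
      simp [Complex.exp_zero, add_neg_cancel, mul_comm]
  -- key sum identity
    have hsum : (∑ x : DTorus d n, ((dFwdR d n j f x : ℝ) : ℂ) * (starRingEnd ℂ) (ς x))
        = (((2 * (n:ℝ) + 1) / (2 * π) : ℝ) : ℂ) * (ω - 1)
          * ∑ x : DTorus d n, ((f x : ℝ) : ℂ) * (starRingEnd ℂ) (ς x) := by
      have h1 : ∀ x : DTorus d n, (starRingEnd ℂ) (ς x) = ω * (starRingEnd ℂ) (ς (x + Pi.single j 1)) := by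
        intro x
        rw [hshift x, map_mul]
        calc (starRingEnd ℂ) (ς x) = 1 * (starRingEnd ℂ) (ς x) := (one_mul _).symm
          _ = ω * ((starRingEnd ℂ) ω * (starRingEnd ℂ) (ς x)) := by rw [← mul_assoc, hωconj]
      have h2 : (∑ x : DTorus d n, ((f (x + Pi.single j 1) : ℝ) : ℂ) * (starRingEnd ℂ) (ς (x + Pi.single j 1)))
          = ∑ x : DTorus d n, ((f x : ℝ) : ℂ) * (starRingEnd ℂ) (ς x) :=
        Equiv.sum_comp (Equiv.addRight (Pi.single j 1 : DTorus d n))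
          (fun y => ((f y : ℝ) : ℂ) * (starRingEnd ℂ) (ς y))
      have h3 : (∑ x : DTorus d n, ((f (x + Pi.single j 1) : ℝ) : ℂ) * (starRingEnd ℂ) (ς x))
          = ω * ∑ x : DTorus d n, ((f x : ℝ) : ℂ) * (starRingEnd ℂ) (ς x) := by
        rw [← h2, Finset.mul_sum]
        refine Finset.sum_congr rfl fun x _ => ?_
        rw [h1 x]; ring
      have h4 : ∀ x ∈ (Finset.univ : Finset (DTorus d n)),
          ((dFwdR d n j f x : ℝ) : ℂ) * (starRingEnd ℂ) (ς x)
            = (((2 * (n:ℝ) + 1) / (2 * π) : ℝ) : ℂ) * (((f (x + Pi.single j 1) : ℝ) : ℂ) * (starRingEnd ℂ) (ς x))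
              - (((2 * (n:ℝ) + 1) / (2 * π) : ℝ) : ℂ) * (((f x : ℝ) : ℂ) * (starRingEnd ℂ) (ς x)) := by
        intro x _
        unfold dFwdR
        push_cast
        ring
      rw [Finset.sum_congr rfl h4, Finset.sum_sub_distrib, ← Finset.mul_sum, ← Finset.mul_sum, h3]
      ring
    rw [hsum]
    ring
  · rw [if_neg hk, if_neg hk, mul_zero]

lemma exCoef_ne_cube_zero (d n : ℕ) (g : DTorus d n → ℂ) (k : Fin d → ℤ)
    (hk : k ∉ cube d n) : exCoef d n g k = 0 := by
  unfold exCoef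
  rw [if_neg]
  intro h
  apply hk
  unfold cube
  rw [Fintype.mem_piFinset]
  intro i
  rw [Finset.mem_Icc, ← abs_le]
  exact h i

lemma latNormSq_nonneg (d : ℕ) (k : Fin d → ℤ) : 0 ≤ latNormSq d k := by
  unfold latNormSq; positivity

lemma sobWeight_nonneg (d : ℕ) (J : ℝ) (k : Fin d → ℤ) : 0 ≤ sobWeight d J k := by
  unfold sobWeight
  have := latNormSq_nonneg d k
  positivity


/-- For every `J ∈ ℝ`, `n`, `j` and `f : T_n^d → ℝ`, the interpolated discrete
derivative satisfies `‖ex_n ∂_{n,j} f‖_{H_J} ≤ ‖ex_n f‖_{H_{J+1}}`. -/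
theorem ex_discrete_derivative_sobolev_bound (d n : ℕ) (J : ℝ) (j : Fin d)
    (f : DTorus d n → ℝ) :
    sobNorm d J (exCoef d n (fun x => ((dFwdR d n j f x : ℝ) : ℂ)))
      ≤ sobNorm d (J + 1) (exCoef d n (fun x => ((f x : ℝ) : ℂ))) := by
  unfold sobNorm
  apply Real.sqrt_le_sqrt
  unfold sobNormSq
  set g := exCoef d n (fun x => ((dFwdR d n j f x : ℝ) : ℂ)) with hg
  set c := exCoef d n (fun x => ((f x : ℝ) : ℂ)) with hc
  have hterm : ∀ k : Fin d → ℤ,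
      sobWeight d J k * ‖g k‖ ^ 2 ≤ sobWeight d (J + 1) k * ‖c k‖ ^ 2 := by
    intro k
    set v : ℝ := (((1 : ZMod (2*n+1)).val : ℝ)) with hv
    set θ : ℝ := 2 * π * ((k j : ℝ)) * v / (2 * (n:ℝ) + 1) with hθ
    have hv0 : 0 ≤ v := Nat.cast_nonneg _
    have hv1 : v ≤ 1 := by
      rw [hv]
      have : (1 : ZMod (2*n+1)).val ≤ 1 := by
        rw [ZMod.val_one_eq_one_mod]
        exact Nat.mod_le _ _
      exact_mod_cast this
    have hN0 : (0:ℝ) < 2 * (n:ℝ) + 1 := by positivity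
    set μ : ℂ := (((2 * (n:ℝ) + 1) / (2 * π) : ℝ) : ℂ)
        * (Complex.exp (Complex.I * (θ:ℝ)) - 1) with hμ
    have hgk : g k = μ * c k := exCoef_dFwd d n j f k
    have hμle : ‖μ‖ ≤ |((k j : ℝ))| := by
      rw [hμ, norm_mul, Complex.norm_real, Real.norm_eq_abs,
        abs_of_nonneg (by positivity : (0:ℝ) ≤ (2 * (n:ℝ) + 1) / (2 * π))]
      have h1 : ‖Complex.exp (Complex.I * (θ:ℝ)) - 1‖ ≤ |θ| := norm_exp_I_mul_sub_one_le θ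
      have h2 : |θ| = 2 * π * |((k j : ℝ))| * v / (2 * (n:ℝ) + 1) := by
        rw [hθ, abs_div, abs_mul, abs_mul, abs_of_nonneg (by positivity : (0:ℝ) ≤ 2*π),
          abs_of_nonneg hv0, abs_of_nonneg hN0.le]
      have h3 : (2 * (n:ℝ) + 1) / (2 * π) * |θ| = |((k j : ℝ))| * v := by
        rw [h2]
        field_simp
      calc (2 * (n:ℝ) + 1) / (2 * π) * ‖Complex.exp (Complex.I * (θ:ℝ)) - 1‖
          ≤ (2 * (n:ℝ) + 1) / (2 * π) * |θ| := by
            apply mul_le_mul_of_nonneg_left h1 (by positivity)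
        _ = |((k j : ℝ))| * v := h3
        _ ≤ |((k j : ℝ))| * 1 := mul_le_mul_of_nonneg_left hv1 (abs_nonneg _)
        _ = |((k j : ℝ))| := mul_one _
    have hμsq : ‖μ‖ ^ 2 ≤ 1 + latNormSq d k := by
      have h4 : ‖μ‖ ^ 2 ≤ |((k j : ℝ))| ^ 2 := by
        apply pow_le_pow_left₀ (norm_nonneg _) hμle
      have h5 : |((k j : ℝ))| ^ 2 = ((k j : ℝ)) ^ 2 := sq_abs _
      have h6 : ((k j : ℝ)) ^ 2 ≤ latNormSq d k := by
        unfold latNormSq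
        exact Finset.single_le_sum (fun l _ => sq_nonneg ((k l : ℝ))) (Finset.mem_univ j)
      linarith
    have hW : sobWeight d (J + 1) k = sobWeight d J k * (1 + latNormSq d k) := by
      unfold sobWeight
      exact Real.rpow_add_one (by have := latNormSq_nonneg d k; positivity) J
    rw [hgk, norm_mul, mul_pow, hW]
    have hw := sobWeight_nonneg d J k
    have hcn : (0:ℝ) ≤ ‖c k‖ ^ 2 := by positivity
    calc sobWeight d J k * (‖μ‖ ^ 2 * ‖c k‖ ^ 2)
        = (sobWeight d J k * ‖μ‖ ^ 2) * ‖c k‖ ^ 2 := by ring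
      _ ≤ (sobWeight d J k * (1 + latNormSq d k)) * ‖c k‖ ^ 2 := by
          apply mul_le_mul_of_nonneg_right _ hcn
          exact mul_le_mul_of_nonneg_left hμsq hw
      _ = sobWeight d J k * (1 + latNormSq d k) * ‖c k‖ ^ 2 := rfl
  apply Summable.tsum_le_tsum hterm
  · apply summable_of_ne_finset_zero (s := cube d n)
    intro k hk
    rw [hg, exCoef_ne_cube_zero d n _ k hk]
    simp
  · apply summable_of_ne_finset_zero (s := cube d n)
    intro k hk
    rw [hc, exCoef_ne_cube_zero d n _ k hk]
    simp

end
end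

section
/- On the open set of symmetric positive definite N×N matrices, the matrix square root map A ↦ √A is continuously differentiable, and its derivative at A in a symmetric direction B is the unique symmetric matrix D satisfying the Sylvester equation D√A + √A D = B. -/
/-!
Squaring `Y ↦ Y * Y` has derivative `D ↦ D * X + X * D` at `X`. For positive definite `X` this
Sylvester operator is injective, since `tr (Dᴴ (D X + X D))` is the sum of the traces of the
positive semidefinite matrices `D X Dᴴ` and `Dᴴ X D`; so it is invertible. The inverse function
theorem at `X = √A` yields a continuous local inverse `g` of squaring whose derivative at `A` is
the inverse Sylvester operator. For symmetric `Y` near `A`, `(g Y)ᵀ` is a square root of `Y` close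
to `√A`, where `g` inverts squaring, so `g Y` is symmetric, hence positive definite, hence equal
to `√Y`. Thus `√·` inherits the derivative of `g`, and continuity of `√·` together with continuity
of operator inversion gives continuity of the derivative.
-/

open scoped BigOperators

attribute [local instance] Matrix.frobeniusNormedAddCommGroup Matrix.frobeniusNormedSpace

noncomputable section

/-- The set of symmetric positive definite real `N×N` matrices. -/
def SPD (N : ℕ) : Set (Matrix (Fin N) (Fin N) ℝ) :=
  {A | A.PosDef ∧ A.IsSymm}

attribute [local instance] Matrix.frobeniusNormedRing Matrix.frobeniusNormedAlgebra

open Filter Topology ContinuousLinearMap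
open scoped MatrixOrder ComplexOrder

section NormedAlgebra

variable (𝕜 : Type*) {𝔸 : Type*} [NontriviallyNormedField 𝕜] [NormedRing 𝔸] [NormedAlgebra 𝕜 𝔸]

def sylvester : 𝔸 →L[𝕜] 𝔸 →L[𝕜] 𝔸 := (mul 𝕜 𝔸).flip + mul 𝕜 𝔸

variable {𝕜}

@[simp]
lemma sylvester_apply (x d : 𝔸) : sylvester 𝕜 x d = d * x + x * d := rfl

lemma hasStrictFDerivAt_mul_self (x : 𝔸) :
    HasStrictFDerivAt (fun y : 𝔸 => y * y) (sylvester 𝕜 x) x := by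
  refine ((hasStrictFDerivAt_id x).mul' (hasStrictFDerivAt_id x)).congr_fderiv ?_
  ext d
  simp [add_comm]

end NormedAlgebra

namespace Matrix

variable {n : Type*}

lemma PosDef.isSymm {A : Matrix n n ℝ} (hA : A.PosDef) : A.IsSymm :=
  isHermitian_iff_isSymm.mp hA.isHermitian

variable [Fintype n]

lemma PosDef.eq_zero_of_mul_add_mul_eq_zero {𝕜 : Type*} [RCLike 𝕜] {X D : Matrix n n 𝕜}
    (hX : X.PosDef) (h : D * X + X * D = 0) : D = 0 := by
  have hleft := hX.posSemidef.mul_mul_conjTranspose_same D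
  have hright := hX.posSemidef.conjTranspose_mul_mul_same D
  have htrace : (D * X * Dᴴ).trace + (Dᴴ * X * D).trace = 0 := by
    rw [trace_mul_comm (D * X), mul_assoc Dᴴ, ← trace_add, ← mul_add, h, mul_zero, trace_zero]
  have hzero : Dᴴ * X * D = 0 := hright.trace_eq_zero_iff.mp
    (add_eq_zero_iff_of_nonneg hleft.trace_nonneg hright.trace_nonneg |>.mp htrace).2
  refine ext_iff_mulVec.mpr fun v => ?_
  by_contra hv
  rw [zero_mulVec] at hv
  have hpos := hX.dotProduct_mulVec_pos hv
  rw [star_mulVec, dotProduct_mulVec, vecMul_vecMul, ← dotProduct_mulVec, mulVec_mulVec, hzero,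
    zero_mulVec, dotProduct_zero] at hpos
  exact lt_irrefl _ hpos

lemma PosDef.isInvertible_sylvester {𝕜 : Type*} [RCLike 𝕜] [DecidableEq n] {X : Matrix n n 𝕜}
    (hX : X.PosDef) : (sylvester 𝕜 X).IsInvertible := by
  have hinj : Function.Injective (sylvester 𝕜 X) :=
    (injective_iff_map_eq_zero _).mpr fun _ => hX.eq_zero_of_mul_add_mul_eq_zero
  exact ⟨(LinearEquiv.ofInjectiveEndo (sylvester 𝕜 X : _ →ₗ[𝕜] _) hinj).toContinuousLinearEquiv,
    rfl⟩

lemma posDef_mem_nhdsWithin_isSymm {A : Matrix n n ℝ} (hA : A.PosDef) :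
    {M : Matrix n n ℝ | M.PosDef} ∈ 𝓝[{M | M.IsSymm}] A := by
  have hq : Continuous fun p : Matrix n n ℝ × (n → ℝ) => p.2 ⬝ᵥ p.1 *ᵥ p.2 :=
    continuous_snd.dotProduct (continuous_fst.matrix_mulVec continuous_snd)
  have hsphere : ∀ᶠ M in 𝓝 A, ∀ x ∈ Metric.sphere (0 : n → ℝ) 1, 0 < x ⬝ᵥ M *ᵥ x := by
    refine (isCompact_sphere 0 1).eventually_forall_of_forall_eventually fun x hx => ?_
    have hx0 : x ≠ 0 := ne_zero_of_mem_unit_sphere ⟨x, hx⟩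
    have hAx : 0 < x ⬝ᵥ A *ᵥ x := by simpa using hA.dotProduct_mulVec_pos hx0
    exact continuousAt_const.eventually_lt (hq.continuousAt (x := (A, x))) hAx
  filter_upwards [nhdsWithin_le_nhds hsphere, self_mem_nhdsWithin] with M hM hMs
  refine PosDef.of_dotProduct_mulVec_pos (isHermitian_iff_isSymm.mpr hMs) fun x hx => ?_
  have hu := hM (‖x‖⁻¹ • x) (mem_sphere_zero_iff_norm.mpr (norm_smul_inv_norm hx))
  rw [smul_dotProduct, mulVec_smul, dotProduct_smul, smul_smul, smul_eq_mul] at hu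
  simpa using pos_of_mul_pos_right hu (by positivity)

variable [DecidableEq n]

lemma PosDef.posDef_sqrt {A : Matrix n n ℝ} (hA : A.PosDef) : (CFC.sqrt A).PosDef :=
  IsStrictlyPositive.posDef hA.isStrictlyPositive.sqrt

lemma sqrt_eventuallyEq_of_localInverse {A : Matrix n n ℝ} (hA : A.PosDef)
    {g : Matrix n n ℝ → Matrix n n ℝ} (hg : ContinuousAt g A) (hgA : g A = CFC.sqrt A)
    (hleft : ∀ᶠ X in 𝓝 (CFC.sqrt A), g (X * X) = X) (hright : ∀ᶠ Y in 𝓝 A, g Y * g Y = Y) :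
    CFC.sqrt =ᶠ[𝓝[{S | S.IsSymm}] A] g := by
  have hX := hA.posDef_sqrt
  have hleftT : ∀ᶠ X in 𝓝 (CFC.sqrt A), g (Xᵀ * Xᵀ) = Xᵀ :=
    (continuous_id.matrix_transpose.tendsto' _ _ hX.isSymm).eventually hleft
  have hpd : ∀ᶠ X in 𝓝 (CFC.sqrt A), X.IsSymm → X.PosDef :=
    eventually_nhdsWithin_iff.mp (posDef_mem_nhdsWithin_isSymm hX)
  have hgY : ∀ᶠ Y in 𝓝 A, g ((g Y)ᵀ * (g Y)ᵀ) = (g Y)ᵀ ∧ ((g Y).IsSymm → (g Y).PosDef) :=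
    (hgA ▸ hg.tendsto).eventually (hleftT.and hpd)
  filter_upwards [nhdsWithin_le_nhds (hright.and hgY), self_mem_nhdsWithin]
    with Y ⟨hsq, hT, hP⟩ (hY : Yᵀ = Y)
  have hsymm : (g Y).IsSymm := by
    rw [← transpose_mul, hsq, hY] at hT
    exact hT.symm
  exact CFC.sqrt_unique hsq (hP hsymm).posSemidef.nonneg

theorem hasFDerivWithinAt_sqrt {A : Matrix n n ℝ} (hA : A.PosDef) :
    HasFDerivWithinAt CFC.sqrt (sylvester ℝ (CFC.sqrt A)).inverse {S | S.IsSymm} A := by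
  obtain ⟨e, he⟩ := hA.posDef_sqrt.isInvertible_sylvester
  have hf := he.symm ▸ hasStrictFDerivAt_mul_self (𝕜 := ℝ) (CFC.sqrt A)
  have hXX : CFC.sqrt A * CFC.sqrt A = A := CFC.sqrt_mul_sqrt_self A hA.posSemidef.nonneg
  set g := hf.localInverse _ _ _
  have hgA := hf.localInverse_apply_image
  have hg := hf.localInverse_continuousAt
  have hright := hf.eventually_right_inverse
  have hderiv := hf.to_localInverse
  simp only [hXX] at hgA hg hright hderiv
  rw [← he, inverse_equiv]
  exact hderiv.hasFDerivAt.hasFDerivWithinAt.congr_of_eventuallyEq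
    (sqrt_eventuallyEq_of_localInverse hA hg hgA hf.eventually_left_inverse hright) hgA.symm

theorem continuousOn_sylvester_sqrt_inverse :
    ContinuousOn (fun A => (sylvester ℝ (CFC.sqrt A)).inverse) {A : Matrix n n ℝ | A.PosDef} := by
  intro A hA
  have hsqrt : ContinuousWithinAt CFC.sqrt {A : Matrix n n ℝ | A.PosDef} A :=
    (hasFDerivWithinAt_sqrt hA).continuousWithinAt.mono fun _ => PosDef.isSymm
  have hsylv :
      ContinuousWithinAt (fun A => sylvester ℝ (CFC.sqrt A)) {A : Matrix n n ℝ | A.PosDef} A :=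
    (sylvester ℝ).continuous.continuousAt.comp_continuousWithinAt (f := CFC.sqrt) hsqrt
  have hinv : ContinuousAt inverse (sylvester ℝ (CFC.sqrt A)) :=
    (hA.posDef_sqrt.isInvertible_sylvester.contDiffAt_map_inverse (n := 0)).continuousAt
  exact hinv.comp_continuousWithinAt (f := fun A => sylvester ℝ (CFC.sqrt A)) hsylv

lemma PosDef.isSymm_sylvester_inverse {X B : Matrix n n ℝ} (hX : X.PosDef) (hB : B.IsSymm) :
    ((sylvester ℝ X).inverse B).IsSymm := by
  set D := (sylvester ℝ X).inverse B
  have hL := hX.isInvertible_sylvester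
  have hD : D * X + X * D = B := hL.self_apply_inverse B
  refine hL.bijective.injective ?_
  calc sylvester ℝ X Dᵀ = (D * X + X * D)ᵀ := by
        rw [sylvester_apply, transpose_add, transpose_mul, transpose_mul, hX.isSymm.eq, add_comm]
    _ = B := by rw [hD, hB.eq]
    _ = sylvester ℝ X D := hD.symm

end Matrix

open Matrix

/-- On the (relatively) open set of symmetric positive definite matrices inside the
space of symmetric matrices, the matrix square root `A ↦ √A` is continuously
differentiable, and its derivative at `A` in a symmetric direction `B` is the unique
symmetric matrix `D` solving the Sylvester equation `D√A + √A D = B`. -/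
theorem matrix_sqrt_continuously_differentiable (N : ℕ) :
    ∃ (sq : Matrix (Fin N) (Fin N) ℝ → Matrix (Fin N) (Fin N) ℝ)
      (Dsq : Matrix (Fin N) (Fin N) ℝ →
        (Matrix (Fin N) (Fin N) ℝ →L[ℝ] Matrix (Fin N) (Fin N) ℝ)),
      -- `sq A` is the symmetric positive definite square root of `A`
      (∀ A ∈ SPD N, (sq A).PosDef ∧ (sq A).IsSymm ∧ sq A * sq A = A) ∧
      -- the set `SPD N` is relatively open in the subspace of symmetric matrices
      (∀ A ∈ SPD N, SPD N ∈ nhdsWithin A {S : Matrix (Fin N) (Fin N) ℝ | S.IsSymm}) ∧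
      -- `sq` is differentiable (within the symmetric matrices) with derivative `Dsq`
      (∀ A ∈ SPD N,
        HasFDerivWithinAt sq (Dsq A) {S : Matrix (Fin N) (Fin N) ℝ | S.IsSymm} A) ∧
      -- the derivative depends continuously on the base point
      ContinuousOn Dsq (SPD N) ∧
      -- Sylvester equation characterization of the derivative in symmetric directions
      (∀ A ∈ SPD N, ∀ B : Matrix (Fin N) (Fin N) ℝ, B.IsSymm →
        (Dsq A B).IsSymm ∧ Dsq A B * sq A + sq A * Dsq A B = B ∧
        ∀ D : Matrix (Fin N) (Fin N) ℝ, D.IsSymm →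
          D * sq A + sq A * D = B → D = Dsq A B) := by
  refine ⟨CFC.sqrt, fun A => (sylvester ℝ (CFC.sqrt A)).inverse, fun A hA => ?_, fun A hA => ?_,
    fun A hA => hasFDerivWithinAt_sqrt hA.1,
    continuousOn_sylvester_sqrt_inverse.mono fun A hA => hA.1, fun A hA B hB => ?_⟩
  · have hX := hA.1.posDef_sqrt
    exact ⟨hX, hX.isSymm, CFC.sqrt_mul_sqrt_self A hA.1.posSemidef.nonneg⟩
  · filter_upwards [posDef_mem_nhdsWithin_isSymm hA.1, self_mem_nhdsWithin] with M hM hMs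
    exact ⟨hM, hMs⟩
  · have hX := hA.1.posDef_sqrt
    have hL := hX.isInvertible_sylvester
    exact ⟨hX.isSymm_sylvester_inverse hB, hL.self_apply_inverse B,
      fun D _ hD => hL.bijective.injective (hD.trans (hL.self_apply_inverse B).symm)⟩

end
end
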